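/- arXiv:0903.3453 — 2 statements merged into one kernel-verified Lean document; each statement's English description precedes it below -/
import Mathlib

section
/- In the Hecke algebra H_n, the elements X_1,...,X_n defined by X_1 = 1 and X_{k+1} = q^{-1} T_k X_k T_k pairwise commute, and each X_k is invertible. -/
/-- The simple transposition `s_i = (i, i+1)` in the symmetric group `S_n`. -/
def simpleTrans {n : ℕ} (i : Fin (n - 1)) : Equiv.Perm (Fin n) :=
  Equiv.swap ⟨i, by omega⟩ ⟨i + 1, by have := i.isLt; omega⟩

/-- The Coxeter length of a permutation of `Fin n`, as the number of inversions. -/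
def invLen {n : ℕ} (w : Equiv.Perm (Fin n)) : ℕ :=
  (Finset.univ.filter (fun p : Fin n × Fin n => p.1 < p.2 ∧ w p.2 < w p.1)).card

/-- The defining relations of the Hecke algebra of type `A` on generators
`T_1, …, T_{n-1}` (indexed by `Fin (n-1)`): quadratic relations
`(T_i - q)(T_i + 1) = 0`, braid relations, and commutation relations. -/
inductive HeckeRel (F : Type) [Field F] (q : F) (n : ℕ) :
    FreeAlgebra F (Fin (n - 1)) → FreeAlgebra F (Fin (n - 1)) → Prop
  | quad (i : Fin (n - 1)) :
      HeckeRel F q n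
        ((FreeAlgebra.ι F i - algebraMap F _ q) * (FreeAlgebra.ι F i + 1)) 0
  | braid (i j : Fin (n - 1)) (h : (i : ℕ) + 1 = j) :
      HeckeRel F q n
        (FreeAlgebra.ι F i * FreeAlgebra.ι F j * FreeAlgebra.ι F i)
        (FreeAlgebra.ι F j * FreeAlgebra.ι F i * FreeAlgebra.ι F j)
  | comm (i j : Fin (n - 1)) (h : (i : ℕ) + 1 < j) :
      HeckeRel F q n
        (FreeAlgebra.ι F i * FreeAlgebra.ι F j)
        (FreeAlgebra.ι F j * FreeAlgebra.ι F i)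

/-- The Hecke algebra `H_n` of type `A` over `F` with parameter `q`. -/
abbrev HeckeAlgebra (F : Type) [Field F] (q : F) (n : ℕ) : Type :=
  RingQuot (HeckeRel F q n)

/-- The generator `T_i` of the Hecke algebra. -/
noncomputable def heckeT (F : Type) [Field F] (q : F) (n : ℕ) (i : Fin (n - 1)) :
    HeckeAlgebra F q n :=
  RingQuot.mkAlgHom F (HeckeRel F q n) (FreeAlgebra.ι F i)

/-!
Everything reduces to the braid-type identity `X_k (T_k X_k T_k) = (T_k X_k T_k) X_k`, proved by
induction on `k`: writing `X_{k+1} ∝ S W S` with `S = T_k`, `W = X_k`, `T = T_{k+1}`, it follows from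
the braid relation `STS = TST`, from `W T = T W` (as `W` only involves `T_1, …, T_{k-1}`), and from
the case `k` itself. Invertibility holds because the quadratic relation gives
`T_i (T_i + 1 - q) = q`.
-/

theorem Commute.conj_of_braid {M : Type*} [Monoid M] {s t w : M} (hb : s * t * s = t * s * t)
    (hwt : Commute w t) (hwsws : Commute w (s * w * s)) :
    Commute (s * w * s) (t * (s * w * s) * t) := by
  have hw : w * t = t * w := hwt.eq
  have h : s * w * s * w = w * s * w * s := by simpa only [mul_assoc] using hwsws.eq.symm
  show s * w * s * (t * (s * w * s) * t) = t * (s * w * s) * t * (s * w * s)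
  symm
  calc t * (s * w * s) * t * (s * w * s)
      = t * s * w * (s * t * s) * w * s := by simp only [mul_assoc]
    _ = t * s * (w * t) * s * t * w * s := by rw [hb]; simp only [mul_assoc]
    _ = t * s * t * w * s * (t * w) * s := by rw [hw]; simp only [mul_assoc]
    _ = (t * s * t) * (w * s * w) * t * s := by rw [← hw]; simp only [mul_assoc]
    _ = s * t * (s * w * s * w) * t * s := by rw [← hb]; simp only [mul_assoc]
    _ = s * (t * w) * s * w * (s * t * s) := by rw [h]; simp only [mul_assoc]
    _ = s * w * t * s * (w * t) * s * t := by rw [← hw, hb]; simp only [mul_assoc]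
    _ = s * w * (t * s * t) * w * s * t := by rw [hw]; simp only [mul_assoc]
    _ = s * w * s * (t * (s * w * s) * t) := by rw [← hb]; simp only [mul_assoc]

section HeckeRelations

variable {F : Type} [Field F] {q : F} {n : ℕ}

theorem heckeT_braid {i j : Fin (n - 1)} (h : (i : ℕ) + 1 = j) :
    heckeT F q n i * heckeT F q n j * heckeT F q n i
      = heckeT F q n j * heckeT F q n i * heckeT F q n j := by
  simpa only [heckeT, map_mul] using RingQuot.mkAlgHom_rel F (HeckeRel.braid (q := q) i j h)

theorem heckeT_commute {i j : Fin (n - 1)} (h : (i : ℕ) + 1 < j) :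
    Commute (heckeT F q n i) (heckeT F q n j) := by
  rw [commute_iff_eq]
  simpa only [heckeT, map_mul] using RingQuot.mkAlgHom_rel F (HeckeRel.comm (q := q) i j h)

theorem heckeT_quadratic (i : Fin (n - 1)) :
    (heckeT F q n i - algebraMap F _ q) * (heckeT F q n i + 1) = 0 := by
  simpa only [heckeT, map_mul, map_sub, map_add, map_one, map_zero, AlgHom.commutes] using
    RingQuot.mkAlgHom_rel F (HeckeRel.quad (q := q) i)

theorem isUnit_heckeT (hq : q ≠ 0) (i : Fin (n - 1)) : IsUnit (heckeT F q n i) := by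
  set t := heckeT F q n i
  set c := algebraMap F (HeckeAlgebra F q n) q
  have hct : c * t = t * c := Algebra.commutes q t
  have hcomm : Commute t (t + 1 - c) :=
    ((Commute.refl t).add_right (Commute.one_right t)).sub_right hct.symm
  have hmul : t * (t + 1 - c) = c := by
    have hquad : (t - c) * (t + 1) = 0 := heckeT_quadratic i
    rw [← sub_eq_zero, ← hquad]
    simp only [mul_add, mul_sub, sub_mul, mul_one, hct]
    abel
  have hc : IsUnit c := (IsUnit.mk0 q hq).map _
  rw [← hmul, hcomm.isUnit_mul_iff] at hc
  exact hc.1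

end HeckeRelations

section JucysMurphy

variable {F : Type} [Field F] {q : F} {n : ℕ} {X : ℕ → HeckeAlgebra F q n}

theorem commute_jm_heckeT (hX1 : X 0 = 1)
    (hXrec : ∀ k : Fin (n - 1),
      X ((k : ℕ) + 1) = q⁻¹ • (heckeT F q n k * X k * heckeT F q n k)) :
    ∀ (j : ℕ) (k : Fin (n - 1)), j < k → Commute (X j) (heckeT F q n k)
  | 0, _, _ => hX1 ▸ Commute.one_left _
  | m + 1, k, hk => by
    have hm : m < n - 1 := by omega
    have hTT : Commute (heckeT F q n ⟨m, hm⟩) (heckeT F q n k) := heckeT_commute hk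
    rw [hXrec ⟨m, hm⟩]
    exact ((hTT.mul_left (commute_jm_heckeT hX1 hXrec m k (by omega))).mul_left hTT).smul_left _

theorem commute_jm_conj (hX1 : X 0 = 1)
    (hXrec : ∀ k : Fin (n - 1),
      X ((k : ℕ) + 1) = q⁻¹ • (heckeT F q n k * X k * heckeT F q n k)) :
    ∀ (m : ℕ) (hm : m < n - 1),
      Commute (X m) (heckeT F q n ⟨m, hm⟩ * X m * heckeT F q n ⟨m, hm⟩)
  | 0, _ => hX1 ▸ Commute.one_left _
  | j + 1, hm => by
    have hj : j < n - 1 := by omega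
    rw [hXrec ⟨j, hj⟩, mul_smul_comm, smul_mul_assoc]
    exact ((Commute.conj_of_braid (heckeT_braid (j := ⟨j + 1, hm⟩) rfl)
      (commute_jm_heckeT hX1 hXrec j _ (Nat.lt_succ_self j))
      (commute_jm_conj hX1 hXrec j hj)).smul_right _).smul_left _

theorem commute_jm_of_lt (hX1 : X 0 = 1)
    (hXrec : ∀ k : Fin (n - 1),
      X ((k : ℕ) + 1) = q⁻¹ • (heckeT F q n k * X k * heckeT F q n k)) :
    ∀ a b : ℕ, a < b → b < n → Commute (X a) (X b)
  | _, 0, hab, _ => absurd hab (Nat.not_lt_zero _)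
  | a, c + 1, hab, hb => by
    have hc : c < n - 1 := by omega
    rw [hXrec ⟨c, hc⟩]
    refine Commute.smul_right ?_ _
    rcases Nat.lt_succ_iff_lt_or_eq.1 hab with hac | rfl
    · have hT := commute_jm_heckeT hX1 hXrec a ⟨c, hc⟩ hac
      exact (hT.mul_right (commute_jm_of_lt hX1 hXrec a c hac (by omega))).mul_right hT
    · exact commute_jm_conj hX1 hXrec a hc

theorem isUnit_jm (hq : q ≠ 0) (hX1 : X 0 = 1)
    (hXrec : ∀ k : Fin (n - 1),
      X ((k : ℕ) + 1) = q⁻¹ • (heckeT F q n k * X k * heckeT F q n k)) :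
    ∀ a : ℕ, a < n → IsUnit (X a)
  | 0, _ => hX1 ▸ isUnit_one
  | m + 1, hm => by
    have hm' : m < n - 1 := by omega
    have hT := isUnit_heckeT hq ⟨m, hm'⟩
    rw [hXrec ⟨m, hm'⟩]
    exact ((hT.mul (isUnit_jm hq hX1 hXrec m (by omega))).mul hT).smul
      (Units.mk0 q⁻¹ (inv_ne_zero hq))

end JucysMurphy

/-- In the Hecke algebra `H_n`, the Jucys–Murphy elements defined by `X_1 = 1` and
`X_{k+1} = q⁻¹ T_k X_k T_k` pairwise commute, and each of them is invertible.
(Here `X` is indexed so that `X k` is the element `X_{k+1}` of the paper.) -/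
theorem hecke_JM_commute_isUnit (F : Type) [Field F] (q : F) (hq : q ≠ 0) (n : ℕ)
    (X : ℕ → HeckeAlgebra F q n)
    (hX1 : X 0 = 1)
    (hXrec : ∀ k : Fin (n - 1),
      X ((k : ℕ) + 1) = q⁻¹ • (heckeT F q n k * X k * heckeT F q n k)) :
    (∀ a b : ℕ, a < n → b < n → X a * X b = X b * X a) ∧
    (∀ a : ℕ, a < n → IsUnit (X a)) := by
  refine ⟨fun a b ha hb => ?_, isUnit_jm hq hX1 hXrec⟩
  rcases lt_trichotomy a b with hab | rfl | hab
  · exact (commute_jm_of_lt hX1 hXrec a b hab hb).eq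
  · rfl
  · exact (commute_jm_of_lt hX1 hXrec b a hab ha).eq.symm
end

section
/- Let A = ⊕_{k∈Z} A_k be a finite-dimensional graded algebra over a field F, and let X, Y be finite-dimensional graded (right) A-modules that are indecomposable. If the underlying ungraded modules For(X) and For(Y) are isomorphic as A-modules, then X ≅ Y[k] as graded A-modules for some k ∈ Z, where [k] denotes the grading shift M[1]_l = M_{l+1}. -/
/-- A submodule `p` of a module `M` graded by `ℳ : ℤ → Submodule F M` is *graded*
(homogeneous) if, as an `F`-subspace, it is the sum of its intersections with the
homogeneous components. -/
def IsGradedSubmodule {F A M : Type} [Field F] [Ring A] [Algebra F A]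
    [AddCommGroup M] [Module F M] [Module A M] [IsScalarTower F A M]
    (ℳ : ℤ → Submodule F M) (p : Submodule A M) : Prop :=
  p.restrictScalars F = ⨆ l : ℤ, (p.restrictScalars F ⊓ ℳ l)

/-!
Write the ungraded isomorphism `f : X ≃ Y` and its inverse as finite sums of homogeneous
components, `fₖ` shifting degrees by `k`. The degree-zero part of `f⁻¹ ∘ f = 1` reads
`∑ₖ (f⁻¹)₋ₖ ∘ fₖ = 1` in the ring of degree-preserving endomorphisms of `X`. That ring is local
by Fitting's lemma: for `n` large, `X = ker φⁿ ⊕ im φⁿ` is a decomposition into graded submodules,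
so graded indecomposability makes `φ` nilpotent or invertible. Hence some `(f⁻¹)₋ₖ ∘ fₖ` is
invertible, so `fₖ` is injective, and comparing dimensions it is an isomorphism `X ≅ Y[k]`.
-/

open DirectSum

namespace GradedModule

section Proj

variable {ι R M : Type*} [DecidableEq ι] [Ring R] [AddCommGroup M] [Module R M]
  (ℳ : ι → Submodule R M) [Decomposition ℳ]

def proj (i : ι) : M →ₗ[R] M :=
  (ℳ i).subtype ∘ₗ component R ι (fun i => ℳ i) i ∘ₗ (decomposeLinearEquiv ℳ).toLinearMap

@[simp]
theorem proj_apply (i : ι) (x : M) : proj ℳ i x = decompose ℳ x i := rfl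

theorem proj_mem (i : ι) (x : M) : proj ℳ i x ∈ ℳ i := (decompose ℳ x i).2

theorem proj_of_mem {i : ι} {x : M} (hx : x ∈ ℳ i) : proj ℳ i x = x :=
  decompose_of_mem_same ℳ hx

theorem proj_of_mem_of_ne {i j : ι} {x : M} (hx : x ∈ ℳ i) (h : i ≠ j) : proj ℳ j x = 0 :=
  decompose_of_mem_ne ℳ hx h

theorem sum_proj {s : Finset ι} (x : M) (hs : ∀ i, proj ℳ i x ≠ 0 → i ∈ s) :
    ∑ i ∈ s, proj ℳ i x = x := by
  classical
  calc ∑ i ∈ s, proj ℳ i x = ∑ i ∈ (decompose ℳ x).support, proj ℳ i x := by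
        refine (Finset.sum_subset (fun i hi => hs i ?_) fun i _ hi => ?_).symm
        · simpa using hi
        · simpa using hi
    _ = x := sum_support_decompose ℳ x

theorem finite_setOf_ne_bot [IsNoetherian R M] : {i | ℳ i ≠ ⊥}.Finite :=
  Submodule.finite_ne_bot_of_iSupIndep (Decomposition.isInternal ℳ).submodule_iSupIndep

end Proj

section Component

variable {ι R M N : Type*} [AddCommGroup ι] [DecidableEq ι] [Ring R]
  [AddCommGroup M] [Module R M] [AddCommGroup N] [Module R N]
  (ℳ : ι → Submodule R M) (𝒩 : ι → Submodule R N) [Decomposition ℳ] [Decomposition 𝒩]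

theorem proj_add_map {f : M →+ N} {k : ι} (hf : ∀ i, ∀ x ∈ ℳ i, f x ∈ 𝒩 (i + k))
    (i : ι) (x : M) : proj 𝒩 (i + k) (f x) = f (proj ℳ i x) := by
  induction x using Decomposition.inductionOn ℳ with
  | zero => simp
  | @homogeneous j x =>
    obtain ⟨x, hx⟩ := x
    by_cases hji : j = i
    · subst hji
      rw [proj_of_mem ℳ hx, proj_of_mem 𝒩 (hf _ _ hx)]
    · rw [proj_of_mem_of_ne ℳ hx hji, proj_of_mem_of_ne 𝒩 (hf _ _ hx) (by simpa using hji),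
        map_zero]
  | add x y hx hy => simp only [map_add, hx, hy]

def gradedComponent (k : ι) (f : M →ₗ[R] N) : M →ₗ[R] N :=
  toModule R ι N (fun i => proj 𝒩 (i + k) ∘ₗ f ∘ₗ (ℳ i).subtype) ∘ₗ
    (decomposeLinearEquiv ℳ).toLinearMap

variable {ℳ 𝒩}

theorem gradedComponent_apply_of_mem {k i : ι} (f : M →ₗ[R] N) {x : M} (hx : x ∈ ℳ i) :
    gradedComponent ℳ 𝒩 k f x = proj 𝒩 (i + k) (f x) := by
  rw [gradedComponent, LinearMap.comp_apply, LinearEquiv.coe_coe,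
    decomposeLinearEquiv_apply_coe ℳ i ⟨x, hx⟩, toModule_lof]
  rfl

theorem gradedComponent_mem {k i : ι} (f : M →ₗ[R] N) {x : M} (hx : x ∈ ℳ i) :
    gradedComponent ℳ 𝒩 k f x ∈ 𝒩 (i + k) := by
  rw [gradedComponent_apply_of_mem f hx]
  exact proj_mem 𝒩 _ _

theorem proj_add_gradedComponent (k : ι) (f : M →ₗ[R] N) (i : ι) (x : M) :
    proj 𝒩 (i + k) (gradedComponent ℳ 𝒩 k f x) = gradedComponent ℳ 𝒩 k f (proj ℳ i x) :=
  proj_add_map ℳ 𝒩 (f := (gradedComponent ℳ 𝒩 k f).toAddMonoidHom)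
    (fun _ _ hx => gradedComponent_mem f hx) i x

theorem map_gradedComponent_of_surjective {k : ι} {f : M →ₗ[R] N}
    (hf : Function.Surjective (gradedComponent ℳ 𝒩 k f)) (i : ι) :
    (ℳ i).map (gradedComponent ℳ 𝒩 k f) = 𝒩 (i + k) := by
  refine le_antisymm (Submodule.map_le_iff_le_comap.mpr fun x hx => gradedComponent_mem f hx)
    fun y hy => ?_
  obtain ⟨x, rfl⟩ := hf y
  refine ⟨proj ℳ i x, proj_mem ℳ i x, ?_⟩
  rw [← proj_add_gradedComponent, proj_of_mem 𝒩 hy]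

theorem exists_sum_gradedComponent [IsNoetherian R M] [IsNoetherian R N] (f : M →ₗ[R] N) :
    ∃ T : Finset ι, ∑ k ∈ T, gradedComponent ℳ 𝒩 k f = f := by
  classical
  open scoped Pointwise in
  refine ⟨(finite_setOf_ne_bot 𝒩).toFinset - (finite_setOf_ne_bot ℳ).toFinset,
    decompose_lhom_ext ℳ fun i => LinearMap.ext fun ⟨x, hx⟩ => ?_⟩
  simp only [LinearMap.comp_apply, Submodule.subtype_apply, LinearMap.sum_apply,
    gradedComponent_apply_of_mem f hx]
  by_cases hx0 : x = 0
  · simp [hx0]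
  refine (Finset.sum_map _ (addLeftEmbedding i) fun j => proj 𝒩 j (f x)).symm.trans ?_
  refine sum_proj 𝒩 _ fun j hj => Finset.mem_map.mpr ⟨j - i, ?_, by simp⟩
  refine Finset.sub_mem_sub (Set.Finite.mem_toFinset _ |>.mpr fun h => hj ?_)
    (Set.Finite.mem_toFinset _ |>.mpr fun h => hx0 ?_)
  · simpa [h] using proj_mem 𝒩 j (f x)
  · simpa [h] using hx

theorem sum_gradedComponent_neg_comp {f : M →ₗ[R] N} {g : N →ₗ[R] M} (hgf : g ∘ₗ f = .id)
    {T : Finset ι} (hT : ∑ k ∈ T, gradedComponent ℳ 𝒩 k f = f) :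
    ∑ k ∈ T, gradedComponent 𝒩 ℳ (-k) g ∘ₗ gradedComponent ℳ 𝒩 k f = .id := by
  refine decompose_lhom_ext ℳ fun i => LinearMap.ext fun ⟨x, hx⟩ => ?_
  have hterm (k : ι) : gradedComponent 𝒩 ℳ (-k) g (gradedComponent ℳ 𝒩 k f x) =
      proj ℳ i (g (gradedComponent ℳ 𝒩 k f x)) := by
    rw [gradedComponent_apply_of_mem g (gradedComponent_mem f hx), add_neg_cancel_right]
  calc (∑ k ∈ T, gradedComponent 𝒩 ℳ (-k) g ∘ₗ gradedComponent ℳ 𝒩 k f) x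
      = ∑ k ∈ T, proj ℳ i (g (gradedComponent ℳ 𝒩 k f x)) := by
        simp only [LinearMap.sum_apply, LinearMap.comp_apply, hterm]
    _ = proj ℳ i (g (f x)) := by rw [← map_sum, ← map_sum, ← LinearMap.sum_apply, hT]
    _ = x := by rw [← LinearMap.comp_apply g f, hgf, LinearMap.id_apply, proj_of_mem ℳ hx]

end Component

section SMul

variable {ι R A M N : Type*} [AddCommGroup ι] [DecidableEq ι] [CommRing R] [Ring A] [Algebra R A]
  [AddCommGroup M] [Module R M] [Module A M] [AddCommGroup N] [Module R N] [Module A N]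
  (𝒜 : ι → Submodule R A) (ℳ : ι → Submodule R M) (𝒩 : ι → Submodule R N)
  [Decomposition ℳ] [Decomposition 𝒩] [SetLike.GradedSMul 𝒜 ℳ] [SetLike.GradedSMul 𝒜 𝒩]

theorem proj_add_smul {m : ι} {a : A} (ha : a ∈ 𝒜 m) (i : ι) (x : M) :
    proj ℳ (i + m) (a • x) = a • proj ℳ i x :=
  proj_add_map ℳ ℳ (f := DistribSMul.toAddMonoidHom M a)
    (fun j _ hy => add_comm m j ▸ SetLike.GradedSMul.smul_mem ha hy) i x

variable {𝒜 ℳ 𝒩}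

theorem gradedComponent_smul [IsScalarTower R A M] [IsScalarTower R A N] (h𝒜 : ⨆ k, 𝒜 k = ⊤)
    (k : ι) (f : M →ₗ[A] N) (a : A) (x : M) :
    gradedComponent ℳ 𝒩 k (f.restrictScalars R) (a • x) =
      a • gradedComponent ℳ 𝒩 k (f.restrictScalars R) x := by
  have ha : a ∈ ⨆ k, 𝒜 k := h𝒜 ▸ Submodule.mem_top
  induction ha using Submodule.iSup_induction' with
  | mem m a ha =>
    induction x using Decomposition.inductionOn ℳ with
    | zero => simp
    | @homogeneous i x =>
      obtain ⟨x, hx⟩ := x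
      have hax : a • x ∈ ℳ (i + m) := add_comm m i ▸ SetLike.GradedSMul.smul_mem ha hx
      rw [gradedComponent_apply_of_mem _ hax, gradedComponent_apply_of_mem _ hx,
        LinearMap.restrictScalars_apply, LinearMap.restrictScalars_apply, map_smul,
        add_right_comm, proj_add_smul 𝒜 𝒩 ha]
    | add x y hx hy => simp only [smul_add, map_add, hx, hy]
  | zero => simp
  | add a b _ _ ha hb => simp only [add_smul, map_add, ha, hb]

variable (𝒜 ℳ 𝒩) in
def gradedComponentHom [IsScalarTower R A M] [IsScalarTower R A N] (h𝒜 : ⨆ k, 𝒜 k = ⊤)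
    (k : ι) (f : M →ₗ[A] N) : M →ₗ[A] N where
  __ := gradedComponent ℳ 𝒩 k (f.restrictScalars R)
  map_smul' := gradedComponent_smul h𝒜 k f

@[simp]
theorem gradedComponentHom_apply [IsScalarTower R A M] [IsScalarTower R A N]
    (h𝒜 : ⨆ k, 𝒜 k = ⊤) (k : ι) (f : M →ₗ[A] N) (x : M) :
    gradedComponentHom 𝒜 ℳ 𝒩 h𝒜 k f x = gradedComponent ℳ 𝒩 k (f.restrictScalars R) x := rfl

end SMul

section GradedEnd

variable {ι R : Type*} (A : Type*) {M : Type*} [AddCommGroup ι] [DecidableEq ι] [Ring R] [Ring A]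
  [AddCommGroup M] [Module R M] [Module A M] (ℳ : ι → Submodule R M)

def gradedEnd : Subring (Module.End A M) where
  carrier := {φ | ∀ i, ∀ x ∈ ℳ i, φ x ∈ ℳ i}
  mul_mem' hφ hψ i x hx := hφ i _ (hψ i x hx)
  one_mem' _ _ hx := hx
  add_mem' hφ hψ i x hx := add_mem (hφ i x hx) (hψ i x hx)
  zero_mem' _ _ _ := zero_mem _
  neg_mem' hφ i x hx := neg_mem (hφ i x hx)

variable {A ℳ} [Decomposition ℳ] {φ : Module.End A M}

theorem proj_apply_of_mem_gradedEnd (hφ : φ ∈ gradedEnd A ℳ) (i : ι) (x : M) :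
    proj ℳ i (φ x) = φ (proj ℳ i x) := by
  simpa using proj_add_map ℳ ℳ (f := φ.toAddMonoidHom) (k := 0)
    (fun i x hx => by simpa using hφ i x hx) i x

theorem isHomogeneous_ker_of_mem_gradedEnd (hφ : φ ∈ gradedEnd A ℳ) :
    (LinearMap.ker φ).IsHomogeneous ℳ := fun i x hx => by
  rw [LinearMap.mem_ker] at hx ⊢
  rw [← proj_apply, ← proj_apply_of_mem_gradedEnd hφ, hx, map_zero]

theorem isHomogeneous_range_of_mem_gradedEnd (hφ : φ ∈ gradedEnd A ℳ) :
    (LinearMap.range φ).IsHomogeneous ℳ := by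
  rintro i _ ⟨x, rfl⟩
  exact ⟨proj ℳ i x, (proj_apply_of_mem_gradedEnd hφ i x).symm⟩

theorem isUnit_of_bijective_of_mem_gradedEnd (hφ : φ ∈ gradedEnd A ℳ)
    (hbij : Function.Bijective φ) :
    IsUnit (⟨φ, hφ⟩ : gradedEnd A ℳ) := by
  let e := LinearEquiv.ofBijective φ hbij
  have he : (e.symm : Module.End A M) ∈ gradedEnd A ℳ := fun i x hx => by
    have hφe (y : M) : φ (e.symm y) = y := e.apply_symm_apply y
    have : proj ℳ i (e.symm x) = e.symm x := e.injective <| by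
      change φ _ = φ _
      rw [← proj_apply_of_mem_gradedEnd hφ, hφe, proj_of_mem ℳ hx]
    exact this ▸ proj_mem ℳ i _
  exact ⟨⟨⟨φ, hφ⟩, ⟨_, he⟩, Subtype.ext <| LinearMap.ext e.apply_symm_apply,
    Subtype.ext <| LinearMap.ext e.symm_apply_apply⟩, rfl⟩

end GradedEnd

section Fitting

variable {F A M : Type} [Field F] [Ring A] [Algebra F A] [AddCommGroup M] [Module F M] [Module A M]
  [IsScalarTower F A M] {ℳ : ℤ → Submodule F M} [Decomposition ℳ]

theorem isGradedSubmodule_of_isHomogeneous {p : Submodule A M} (hp : p.IsHomogeneous ℳ) :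
    IsGradedSubmodule ℳ p := by
  classical
  refine le_antisymm (fun x hx => ?_) (iSup_le fun _ => inf_le_left)
  rw [← sum_support_decompose ℳ x]
  exact Submodule.sum_mem _ fun i _ => Submodule.mem_iSup_of_mem i ⟨hp i hx, (decompose ℳ x i).2⟩

variable [FiniteDimensional F M]

theorem isNilpotent_or_isUnit_of_mem_gradedEnd
    (hind : ∀ p q : Submodule A M,
      IsGradedSubmodule ℳ p → IsGradedSubmodule ℳ q → IsCompl p q → p = ⊥ ∨ q = ⊥)
    (φ : gradedEnd A ℳ) : IsNilpotent φ ∨ IsUnit φ := by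
  have : IsNoetherian A M := isNoetherian_of_tower F inferInstance
  have : IsArtinian A M := isArtinian_of_tower F inferInstance
  obtain ⟨n, hn⟩ := Filter.eventually_atTop.mp
    (φ : Module.End A M).eventually_isCompl_ker_pow_range_pow
  have hmem : (φ : Module.End A M) ^ (n + 1) ∈ gradedEnd A ℳ := (φ ^ (n + 1)).2
  rcases hind _ _ (isGradedSubmodule_of_isHomogeneous (isHomogeneous_ker_of_mem_gradedEnd hmem))
    (isGradedSubmodule_of_isHomogeneous (isHomogeneous_range_of_mem_gradedEnd hmem))
    (hn (n + 1) n.le_succ) with hker | hrange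
  · have hinj : Function.Injective (φ : Module.End A M) := by
      rw [LinearMap.ker_eq_bot, pow_succ, Module.End.coe_mul] at hker
      exact hker.of_comp
    exact .inr <| isUnit_of_bijective_of_mem_gradedEnd φ.2
      ⟨hinj, IsArtinian.surjective_of_injective_endomorphism _ hinj⟩
  · exact .inl ⟨n + 1, Subtype.ext (LinearMap.range_eq_bot.mp hrange)⟩

theorem isLocalRing_gradedEnd [Nontrivial M]
    (hind : ∀ p q : Submodule A M,
      IsGradedSubmodule ℳ p → IsGradedSubmodule ℳ q → IsCompl p q → p = ⊥ ∨ q = ⊥) :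
    IsLocalRing (gradedEnd A ℳ) :=
  .of_isUnit_or_isUnit_one_sub_self fun φ =>
    (isNilpotent_or_isUnit_of_mem_gradedEnd hind φ).elim (.inr ·.isUnit_one_sub) .inl

end Fitting

section Shift

variable {ι R A M N : Type*} [AddCommGroup ι] [DecidableEq ι] [CommRing R] [Ring A] [Algebra R A]
  [AddCommGroup M] [Module R M] [Module A M] [IsScalarTower R A M]
  [AddCommGroup N] [Module R N] [Module A N] [IsScalarTower R A N]
  {𝒜 : ι → Submodule R A} (ℳ : ι → Submodule R M) (𝒩 : ι → Submodule R N)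
  [Decomposition ℳ] [Decomposition 𝒩] [SetLike.GradedSMul 𝒜 ℳ] [SetLike.GradedSMul 𝒜 𝒩]

theorem gradedComponentHom_neg_comp_mem_gradedEnd (h𝒜 : ⨆ k, 𝒜 k = ⊤) (k : ι) (f : M →ₗ[A] N)
    (g : N →ₗ[A] M) :
    gradedComponentHom 𝒜 𝒩 ℳ h𝒜 (-k) g ∘ₗ gradedComponentHom 𝒜 ℳ 𝒩 h𝒜 k f ∈ gradedEnd A ℳ :=
  fun i x hx => by
    simpa using gradedComponent_mem (ℳ := 𝒩) (𝒩 := ℳ) (k := -k) (g.restrictScalars R)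
      (gradedComponent_mem (𝒩 := 𝒩) (k := k) (f.restrictScalars R) hx)

theorem exists_injective_gradedComponentHom [IsNoetherian R M] [IsNoetherian R N]
    [IsLocalRing (gradedEnd A ℳ)] (h𝒜 : ⨆ k, 𝒜 k = ⊤) (f : M ≃ₗ[A] N) :
    ∃ k, Function.Injective (gradedComponentHom 𝒜 ℳ 𝒩 h𝒜 k f) := by
  obtain ⟨T, hT⟩ :=
    exists_sum_gradedComponent (ℳ := ℳ) (𝒩 := 𝒩) ((f : M →ₗ[A] N).restrictScalars R)
  have hid := sum_gradedComponent_neg_comp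
    (g := (f.symm : N →ₗ[A] M).restrictScalars R) (LinearMap.ext f.symm_apply_apply) hT
  let g (k : ι) : gradedEnd A ℳ :=
    ⟨_, gradedComponentHom_neg_comp_mem_gradedEnd ℳ 𝒩 h𝒜 k f (f.symm : N →ₗ[A] M)⟩
  have hsum : ∑ k ∈ T, g k = 1 := by
    ext x
    simpa [g] using congr($hid x)
  obtain ⟨k, -, hk⟩ := IsLocalRing.exists_of_isUnit_sum (f := g) (hsum ▸ isUnit_one)
  exact ⟨k, Function.Injective.of_comp (f := gradedComponentHom 𝒜 𝒩 ℳ h𝒜 (-k) f.symm)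
    ((Module.End.isUnit_iff _).mp (hk.map (gradedEnd A ℳ).subtype)).1⟩

end Shift

end GradedModule

open GradedModule

theorem graded_indecomposable_iso_shift_general
    (F A : Type) [Field F] [Ring A] [Algebra F A]
    (𝒜 : ℤ → Submodule F A) (h𝒜 : DirectSum.IsInternal 𝒜)
    (X : Type) [AddCommGroup X] [Module F X] [Module A X] [IsScalarTower F A X]
    [FiniteDimensional F X]
    (ℳX : ℤ → Submodule F X) (hℳX : DirectSum.IsInternal ℳX)
    (hsmulX : ∀ (k l : ℤ), ∀ a ∈ 𝒜 k, ∀ x ∈ ℳX l, a • x ∈ ℳX (l + k))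
    (Y : Type) [AddCommGroup Y] [Module F Y] [Module A Y] [IsScalarTower F A Y]
    [FiniteDimensional F Y]
    (ℳY : ℤ → Submodule F Y) (hℳY : DirectSum.IsInternal ℳY)
    (hsmulY : ∀ (k l : ℤ), ∀ a ∈ 𝒜 k, ∀ y ∈ ℳY l, a • y ∈ ℳY (l + k))
    -- `X` and `Y` are indecomposable graded modules:
    (hXind : Nontrivial X ∧ ∀ p q : Submodule A X,
      IsGradedSubmodule ℳX p → IsGradedSubmodule ℳX q → IsCompl p q → p = ⊥ ∨ q = ⊥)
    -- the underlying ungraded modules are isomorphic: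
    (hiso : Nonempty (X ≃ₗ[A] Y)) :
    ∃ (k : ℤ) (f : X ≃ₗ[A] Y), ∀ l : ℤ,
      (ℳX l).map ((f : X →ₗ[A] Y).restrictScalars F) = ℳY (l + k) := by
  obtain ⟨_, hXind⟩ := hXind
  obtain ⟨f⟩ := hiso
  let := hℳX.chooseDecomposition
  let := hℳY.chooseDecomposition
  have : SetLike.GradedSMul 𝒜 ℳX :=
    ⟨fun k l _ _ ha hx => by simpa [vadd_eq_add, add_comm] using hsmulX k l _ ha _ hx⟩
  have : SetLike.GradedSMul 𝒜 ℳY :=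
    ⟨fun k l _ _ ha hx => by simpa [vadd_eq_add, add_comm] using hsmulY k l _ ha _ hx⟩
  have := isLocalRing_gradedEnd hXind
  obtain ⟨k, hinj⟩ := exists_injective_gradedComponentHom ℳX ℳY h𝒜.submodule_iSup_eq_top f
  have hsurj := (LinearMap.injective_iff_surjective_of_finrank_eq_finrank
    (f.restrictScalars F).finrank_eq).mp hinj
  exact ⟨k, .ofBijective _ ⟨hinj, hsurj⟩, map_gradedComponent_of_surjective hsurj⟩

/-- Let `A = ⊕ₖ Aₖ` be a finite-dimensional graded algebra over a field `F`, and
let `X`, `Y` be finite-dimensional graded (right) `A`-modules (grading convention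
`X_l · A_k ⊆ X_{l+k}`) that are indecomposable.  If the underlying ungraded
modules `For(X)` and `For(Y)` are isomorphic as `A`-modules, then `X ≅ Y[k]` as
graded `A`-modules for some `k ∈ ℤ`, i.e. there is an `A`-module isomorphism
carrying `X_l` onto `Y_{l+k}` for all `l` (recall `Y[k]_l = Y_{l+k}`). -/
theorem graded_indecomposable_iso_shift
    (F A : Type) [Field F] [Ring A] [Algebra F A] [FiniteDimensional F A]
    (𝒜 : ℤ → Submodule F A) (h𝒜 : DirectSum.IsInternal 𝒜)
    (h𝒜mul : ∀ (k l : ℤ), ∀ a ∈ 𝒜 k, ∀ b ∈ 𝒜 l, a * b ∈ 𝒜 (k + l))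
    (X : Type) [AddCommGroup X] [Module F X] [Module A X] [IsScalarTower F A X]
    [FiniteDimensional F X]
    (ℳX : ℤ → Submodule F X) (hℳX : DirectSum.IsInternal ℳX)
    (hsmulX : ∀ (k l : ℤ), ∀ a ∈ 𝒜 k, ∀ x ∈ ℳX l, a • x ∈ ℳX (l + k))
    (Y : Type) [AddCommGroup Y] [Module F Y] [Module A Y] [IsScalarTower F A Y]
    [FiniteDimensional F Y]
    (ℳY : ℤ → Submodule F Y) (hℳY : DirectSum.IsInternal ℳY)
    (hsmulY : ∀ (k l : ℤ), ∀ a ∈ 𝒜 k, ∀ y ∈ ℳY l, a • y ∈ ℳY (l + k))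
    -- `X` and `Y` are indecomposable graded modules:
    (hXind : Nontrivial X ∧ ∀ p q : Submodule A X,
      IsGradedSubmodule ℳX p → IsGradedSubmodule ℳX q → IsCompl p q → p = ⊥ ∨ q = ⊥)
    (hYind : Nontrivial Y ∧ ∀ p q : Submodule A Y,
      IsGradedSubmodule ℳY p → IsGradedSubmodule ℳY q → IsCompl p q → p = ⊥ ∨ q = ⊥)
    -- the underlying ungraded modules are isomorphic:
    (hiso : Nonempty (X ≃ₗ[A] Y)) :
    ∃ (k : ℤ) (f : X ≃ₗ[A] Y), ∀ l : ℤ,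
      (ℳX l).map ((f : X →ₗ[A] Y).restrictScalars F) = ℳY (l + k) :=
  graded_indecomposable_iso_shift_general F A 𝒜 h𝒜 X ℳX hℳX hsmulX Y ℳY hℳY hsmulY hXind hiso
end
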